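/- Let $a,c,C$ be real numbers with $0<c\leq a\leq C$, let $k$ be a positive integer, and consider $f(\eta)=-a\eta^{2k+1}+\sum_{j=0}^{2k}a_j\eta^j$ with $|a_j|\leq C$ for all $j$. Then there exist constants $a''\geq 0$ and $b''>0$, depending only on $c$, $C$ and $k$, such that for all real $u,v$: $\operatorname{sgn}(u)\,(f(u+v)-f(v)) \leq a''(1+|v|)^{2k+1} - b''|u|^{2k+1}$. -/

import Mathlib

/-!
For odd `n` the increment `(u + v)ⁿ - vⁿ` has the sign of `u` and size at least `|u|ⁿ / 2ⁿ⁻¹`: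
when `v` and `u + v` have the same sign this is superadditivity of `xⁿ` on `[0, ∞)`, and when
they have opposite signs it is the power mean inequality `(x + y)ⁿ ≤ 2ⁿ⁻¹ (xⁿ + yⁿ)`. Hence the
leading term contributes at most `-(c / 2ⁿ⁻¹) |u|ⁿ`. Every lower-order increment is bounded by
a power `< n` of `|u| + 1 + |v|`, which is at most `δ |u|ⁿ + M (1 + |v|)ⁿ` for any `δ > 0`;
taking `δ` small, half of the dissipative term absorbs it.
-/

open Finset

lemma Real.sign_mul_le_abs (r x : ℝ) : Real.sign r * x ≤ |x| := by
  rcases Real.sign_apply_eq r with h | h | h <;> simp [h, le_abs_self, neg_le_abs]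

section OddPower

variable {n : ℕ}

lemma pow_le_add_pow_sub_pow {u v : ℝ} (hu : 0 ≤ u) (hv : 0 ≤ v) (hn : n ≠ 0) :
    u ^ n ≤ (u + v) ^ n - v ^ n := by
  linarith [pow_add_pow_le hu hv hn]

lemma Odd.pow_le_add_pow_sub_pow_of_nonpos (hn : Odd n) {u v : ℝ} (hu : 0 ≤ u)
    (huv : u + v ≤ 0) : u ^ n ≤ (u + v) ^ n - v ^ n := by
  have h := pow_le_add_pow_sub_pow hu (neg_nonneg.2 huv) hn.pos.ne'
  rw [show u + -(u + v) = -v by ring, hn.neg_pow, hn.neg_pow] at h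
  linarith

lemma Odd.pow_le_two_pow_mul_add_pow_sub_pow (hn : Odd n) {u : ℝ} (hu : 0 ≤ u) (v : ℝ) :
    u ^ n ≤ 2 ^ (n - 1) * ((u + v) ^ n - v ^ n) := by
  have hpos : 0 ≤ (u + v) ^ n - v ^ n := sub_nonneg.2 (hn.pow_le_pow.2 (by linarith))
  have hbound : (u + v) ^ n - v ^ n ≤ 2 ^ (n - 1) * ((u + v) ^ n - v ^ n) :=
    le_mul_of_one_le_left hpos (one_le_pow₀ one_le_two)
  rcases le_total 0 v with hv | hv
  · exact (pow_le_add_pow_sub_pow hu hv hn.pos.ne').trans hbound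
  rcases le_total (u + v) 0 with huv | huv
  · exact (hn.pow_le_add_pow_sub_pow_of_nonpos hu huv).trans hbound
  -- the two endpoints have opposite signs, so the difference is a sum of two `n`-th powers
  have h := add_pow_le huv (neg_nonneg.2 hv) n
  rwa [add_neg_cancel_right, hn.neg_pow, ← sub_eq_add_neg] at h

lemma Odd.abs_pow_le_two_pow_mul_sign_mul_add_pow_sub_pow (hn : Odd n) (u v : ℝ) :
    |u| ^ n ≤ 2 ^ (n - 1) * (Real.sign u * ((u + v) ^ n - v ^ n)) := by
  rcases lt_trichotomy u 0 with hu | rfl | hu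
  · have h := hn.pow_le_two_pow_mul_add_pow_sub_pow (neg_nonneg.2 hu.le) (-v)
    rw [← neg_add, hn.neg_pow, hn.neg_pow, hn.neg_pow] at h
    rw [Real.sign_of_neg hu, abs_of_neg hu, hn.neg_pow]
    linarith
  · simp [hn.pos.ne']
  · rw [Real.sign_of_pos hu, abs_of_pos hu, one_mul]
    exact hn.pow_le_two_pow_mul_add_pow_sub_pow hu.le v

end OddPower

lemma pow_le_mul_pow_add_one_add_inv_pow {j n : ℕ} (hjn : j < n) {x δ : ℝ} (hx : 0 ≤ x)
    (hδ : 0 < δ) : x ^ j ≤ δ * x ^ n + (1 + δ⁻¹) ^ n := by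
  have hR : 1 ≤ 1 + δ⁻¹ := le_add_of_nonneg_right (inv_nonneg.2 hδ.le)
  rcases le_total x (1 + δ⁻¹) with hxR | hRx
  · have h := (pow_le_pow_left₀ hx hxR j).trans (pow_le_pow_right₀ hR hjn.le)
    nlinarith [pow_nonneg hx n]
  · have hδx : 1 ≤ δ * x := by
      rw [← inv_le_iff_one_le_mul₀' hδ]
      exact (le_add_of_nonneg_left zero_le_one).trans hRx
    calc x ^ j ≤ δ * x * x ^ j := le_mul_of_one_le_left (pow_nonneg hx j) hδx
      _ = δ * x ^ (j + 1) := by ring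
      _ ≤ δ * x ^ n := by gcongr; exacts [hR.trans hRx, hjn]
      _ ≤ δ * x ^ n + (1 + δ⁻¹) ^ n := le_add_of_nonneg_right (by positivity)

lemma exists_pow_add_le_mul_pow_add_mul_pow (n : ℕ) {δ : ℝ} (hδ : 0 < δ) :
    ∃ M : ℝ, 0 ≤ M ∧ ∀ j < n, ∀ s t : ℝ, 0 ≤ s → 1 ≤ t →
      (s + t) ^ j ≤ δ * s ^ n + M * t ^ n := by
  set δ' := δ / 2 ^ (n - 1)
  have hδ' : 0 < δ' := by positivity
  refine ⟨δ + (1 + δ'⁻¹) ^ n, by positivity, fun j hjn s t hs ht => ?_⟩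
  have hsplit := add_pow_le hs (zero_le_one.trans ht) n
  have htn : 1 ≤ t ^ n := one_le_pow₀ ht
  calc (s + t) ^ j ≤ δ' * (s + t) ^ n + (1 + δ'⁻¹) ^ n :=
        pow_le_mul_pow_add_one_add_inv_pow hjn (by linarith) hδ'
    _ ≤ δ' * (2 ^ (n - 1) * (s ^ n + t ^ n)) + (1 + δ'⁻¹) ^ n * t ^ n := by
        gcongr
        exact le_mul_of_one_le_right (by positivity) htn
    _ = δ * s ^ n + (δ + (1 + δ'⁻¹) ^ n) * t ^ n := by
        simp only [δ']; field_simp; ring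

lemma exists_abs_sum_mul_pow_sub_le (n : ℕ) (C : ℝ) {ε : ℝ} (hε : 0 < ε) :
    ∃ M : ℝ, 0 ≤ M ∧ ∀ b : ℕ → ℝ, (∀ j < n, |b j| ≤ C) → ∀ u v : ℝ,
      |∑ j ∈ range n, b j * (u + v) ^ j - ∑ j ∈ range n, b j * v ^ j|
        ≤ ε * |u| ^ n + M * (1 + |v|) ^ n := by
  set D := 2 * n * |C| + 1
  have hD : 0 < D := by positivity
  obtain ⟨M, hM0, hM⟩ := exists_pow_add_le_mul_pow_add_mul_pow n (div_pos hε hD)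
  refine ⟨D * M, by positivity, fun b hb u v => ?_⟩
  set B := ε / D * |u| ^ n + M * (1 + |v|) ^ n
  have hterm : ∀ j ∈ range n, |b j * ((u + v) ^ j - v ^ j)| ≤ |C| * (2 * B) := by
    intro j hj
    have hjn := mem_range.1 hj
    have hw : ∀ w, |w| ≤ |u| + (1 + |v|) → |w| ^ j ≤ B := fun w hw =>
      (pow_le_pow_left₀ (abs_nonneg w) hw j).trans
        (hM j hjn _ _ (abs_nonneg u) (le_add_of_nonneg_right (abs_nonneg v)))
    have hdiff : |(u + v) ^ j - v ^ j| ≤ 2 * B := calc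
      |(u + v) ^ j - v ^ j| ≤ |u + v| ^ j + |v| ^ j :=
          (abs_sub _ _).trans_eq (by rw [abs_pow, abs_pow])
      _ ≤ B + B := add_le_add (hw _ (by linarith [abs_add_le u v, abs_nonneg u]))
          (hw _ (by linarith [abs_nonneg u]))
      _ = 2 * B := by ring
    rw [abs_mul]
    exact mul_le_mul ((hb j hjn).trans (le_abs_self C)) hdiff (abs_nonneg _) (abs_nonneg C)
  have hB : 0 ≤ B := by positivity
  calc |∑ j ∈ range n, b j * (u + v) ^ j - ∑ j ∈ range n, b j * v ^ j|
      = |∑ j ∈ range n, b j * ((u + v) ^ j - v ^ j)| := by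
        simp only [mul_sub, sum_sub_distrib]
    _ ≤ ∑ j ∈ range n, |C| * (2 * B) := (abs_sum_le_sum_abs _ _).trans (sum_le_sum hterm)
    _ = 2 * n * |C| * B := by rw [sum_const, card_range, nsmul_eq_mul]; ring
    _ ≤ D * B := by gcongr; linarith
    _ = ε * |u| ^ n + D * M * (1 + |v|) ^ n := by simp only [B]; field_simp

theorem stmt_6_general (c C : ℝ) (hc : 0 < c) (k : ℕ) :
    ∃ a'' b'' : ℝ, 0 ≤ a'' ∧ 0 < b'' ∧
      ∀ (a : ℝ) (aj : ℕ → ℝ), c ≤ a → a ≤ C → (∀ j ≤ 2 * k, |aj j| ≤ C) →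
        ∀ u v : ℝ,
          Real.sign u *
            ((-a * (u + v) ^ (2 * k + 1)
                + ∑ j ∈ Finset.range (2 * k + 1), aj j * (u + v) ^ j)
              - (-a * v ^ (2 * k + 1)
                + ∑ j ∈ Finset.range (2 * k + 1), aj j * v ^ j))
          ≤ a'' * (1 + |v|) ^ (2 * k + 1) - b'' * |u| ^ (2 * k + 1) := by
  obtain ⟨M, hM0, hM⟩ := exists_abs_sum_mul_pow_sub_le (2 * k + 1) C
    (show 0 < c / 2 ^ (2 * k + 1) by positivity)
  refine ⟨M, c / 2 ^ (2 * k + 1), hM0, by positivity, fun a aj hca _ haj u v => ?_⟩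
  set S := Real.sign u * ((u + v) ^ (2 * k + 1) - v ^ (2 * k + 1))
  have hlead : |u| ^ (2 * k + 1) ≤ 2 ^ (2 * k) * S :=
    (odd_two_mul_add_one k).abs_pow_le_two_pow_mul_sign_mul_add_pow_sub_pow u v
  have hS : 0 ≤ S :=
    nonneg_of_mul_nonneg_right ((pow_nonneg (abs_nonneg u) _).trans hlead) (by positivity)
  have hdiss : 2 * (c / 2 ^ (2 * k + 1)) * |u| ^ (2 * k + 1) ≤ a * S := calc
    _ ≤ c / 2 ^ (2 * k + 1) * 2 * (2 ^ (2 * k) * S) := by rw [mul_comm 2]; gcongr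
    _ = c * S := by field_simp; ring
    _ ≤ a * S := by gcongr
  have hlow := (Real.sign_mul_le_abs u _).trans (hM aj (fun j hj => haj j (by omega)) u v)
  linear_combination hlow + hdiss

/-- One-dimensional dissipativity estimate for odd-degree polynomials with
negative leading coefficient: there are constants `a'' ≥ 0`, `b'' > 0`
depending only on `c`, `C`, `k` such that
`sgn(u)(f(u+v) - f(v)) ≤ a''(1+|v|)^(2k+1) - b''|u|^(2k+1)`. -/
theorem stmt_6 (c C : ℝ) (hc : 0 < c) (hcC : c ≤ C) (k : ℕ) (hk : 1 ≤ k) :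
    ∃ a'' b'' : ℝ, 0 ≤ a'' ∧ 0 < b'' ∧
      ∀ (a : ℝ) (aj : ℕ → ℝ), c ≤ a → a ≤ C → (∀ j ≤ 2 * k, |aj j| ≤ C) →
        ∀ u v : ℝ,
          Real.sign u *
            ((-a * (u + v) ^ (2 * k + 1)
                + ∑ j ∈ Finset.range (2 * k + 1), aj j * (u + v) ^ j)
              - (-a * v ^ (2 * k + 1)
                + ∑ j ∈ Finset.range (2 * k + 1), aj j * v ^ j))
          ≤ a'' * (1 + |v|) ^ (2 * k + 1) - b'' * |u| ^ (2 * k + 1) :=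
  stmt_6_general c C hc k
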